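/- For every integer N ≥ 3 and every real x with |x| ≤ 1/2 one has |√(1−x²) − Σ_{m=0}^{N+1} (−1)^m · binom(1/2, m) · x^{2m}| ≤ x^{2N+4}/(15·√π). -/

import Mathlib

open Real Finset

/-- Generalized binomial coefficient `binom(α, m) = α(α−1)⋯(α−m+1)/m!`. -/
noncomputable def genBinom (α : ℝ) (m : ℕ) : ℝ :=
  (∏ i ∈ Finset.range m, (α - i)) / (Nat.factorial m : ℝ)

namespace Stmt7Aux

lemma descPochhammer_smeval_eq (α : ℝ) (m : ℕ) :
    (descPochhammer ℤ m).smeval α = ∏ i ∈ Finset.range m, (α - i) := by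
  induction m with
  | zero => simp [descPochhammer]
  | succ m ih =>
      simp [descPochhammer_succ_right, Polynomial.smeval_mul, Polynomial.smeval_sub,
        Polynomial.smeval_X, Polynomial.smeval_natCast, ih, Finset.prod_range_succ]

lemma genBinom_eq_choose (α : ℝ) (m : ℕ) : genBinom α m = Ring.choose α m := by
  have h := Ring.descPochhammer_eq_factorial_smul_choose α m
  rw [descPochhammer_smeval_eq, nsmul_eq_mul] at h
  have hf : ((Nat.factorial m : ℕ) : ℝ) ≠ 0 := by
    exact_mod_cast (Nat.factorial_ne_zero m)
  rw [genBinom, h]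
  field_simp

noncomputable def b (m : ℕ) : ℝ := genBinom (1/2) m

lemma vand (k : ℕ) : ∑ i ∈ Finset.range (k+1), b i * b (k - i) = (Nat.choose 1 k : ℝ) := by
  have h := Ring.add_choose_eq (r := (1/2 : ℝ)) (s := (1/2 : ℝ)) k (Commute.all _ _)
  rw [show (1/2 + 1/2 : ℝ) = ((1:ℕ):ℝ) by norm_num, Ring.choose_natCast,
    Finset.Nat.sum_antidiagonal_eq_sum_range_succ_mk] at h
  simp only [b, genBinom_eq_choose]
  exact h.symm

lemma genBinom_succ (α : ℝ) (m : ℕ) :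
    genBinom α (m+1) = genBinom α m * ((α - m) / (m+1)) := by
  have h1 : ((Nat.factorial m : ℕ) : ℝ) ≠ 0 := by exact_mod_cast Nat.factorial_ne_zero m
  have h2 : ((m : ℝ) + 1) ≠ 0 := by positivity
  rw [genBinom, genBinom, Finset.prod_range_succ, Nat.factorial_succ]
  push_cast
  rw [div_mul_div_comm, mul_comm ((m:ℝ)+1)]

noncomputable def d (m : ℕ) : ℝ := (-1)^(m+1) * b m

lemma b_eq (m : ℕ) : b m = (-1)^(m+1) * d m := by
  rw [d, ← mul_assoc, ← pow_add]
  rw [Even.neg_one_pow ⟨m+1, by ring⟩, one_mul]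

lemma neg_one_pow_mul (m : ℕ) : ((-1 : ℝ))^m * (-1)^(m+1) = -1 := by
  rw [← pow_add]
  exact Odd.neg_one_pow ⟨m, by ring⟩

lemma d_succ (m : ℕ) : d (m+1) = d m * (((m:ℝ) - 1/2) / ((m:ℝ)+1)) := by
  unfold d b
  rw [genBinom_succ, pow_succ]
  push_cast
  ring

lemma d_one : d 1 = 1/2 := by
  norm_num [d, b, genBinom, Finset.prod_range_succ]

lemma d_five : d 5 = 7/256 := by
  norm_num [d, b, genBinom, Finset.prod_range_succ, Nat.factorial]

lemma d_pos : ∀ m, 1 ≤ m → 0 < d m := by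
  intro m hm
  induction m, hm using Nat.le_induction with
  | base => rw [d_one]; norm_num
  | succ m hm ih =>
      rw [d_succ]
      have h1 : (1:ℝ) ≤ (m:ℝ) := by exact_mod_cast hm
      have h2 : 0 < ((m:ℝ) - 1/2) / ((m:ℝ)+1) := div_pos (by linarith) (by linarith)
      exact mul_pos ih h2

lemma d_step (m : ℕ) (hm : 1 ≤ m) : d (m+1) ≤ d m := by
  rw [d_succ]
  have h1 : (1:ℝ) ≤ (m:ℝ) := by exact_mod_cast hm
  have hpos := d_pos m hm
  have hfac : ((m:ℝ) - 1/2) / ((m:ℝ)+1) ≤ 1 := by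
    rw [div_le_one (by linarith)]; linarith
  nlinarith

lemma d_antitone {m k : ℕ} (hm : 1 ≤ m) (hmk : m ≤ k) : d k ≤ d m := by
  induction k, hmk using Nat.le_induction with
  | base => exact le_refl _
  | succ k hk ih => exact le_trans (d_step k (le_trans hm hk)) ih

lemma d_le_half {m : ℕ} (hm : 1 ≤ m) : d m ≤ 1/2 := by
  have := d_antitone le_rfl hm
  rwa [d_one] at this

lemma geom_bound {t : ℝ} (ht0 : 0 ≤ t) (ht : t ≤ 1/4) (a n : ℕ) :
    ∑ m ∈ Finset.Ico a n, t^m ≤ t^a * (4/3) := by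
  rw [Finset.sum_Ico_eq_sum_range]
  have hc : ∀ k ∈ Finset.range (n - a), t^(a+k) = t^a * t^k := fun k _ => pow_add t a k
  rw [Finset.sum_congr rfl hc, ← Finset.mul_sum]
  have hg : ∑ k ∈ Finset.range (n-a), t^k ≤ 4/3 := by
    rw [geom_sum_eq (by intro h; rw [h] at ht; norm_num at ht : t ≠ 1)]
    have hp : (0:ℝ) ≤ t^(n-a) := pow_nonneg ht0 _
    rw [div_le_iff_of_neg (by linarith : t - 1 < 0)]
    nlinarith
  exact mul_le_mul_of_nonneg_left hg (pow_nonneg ht0 a)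

lemma tail_nonneg {t : ℝ} (ht0 : 0 ≤ t) {a : ℕ} (ha : 1 ≤ a) (n : ℕ) :
    0 ≤ ∑ m ∈ Finset.Ico a n, d m * t^m := by
  apply Finset.sum_nonneg
  intro m hm
  have hm1 : 1 ≤ m := le_trans ha (Finset.mem_Ico.mp hm).1
  exact mul_nonneg (d_pos m hm1).le (pow_nonneg ht0 m)

lemma tail_bound {t : ℝ} (ht0 : 0 ≤ t) (ht : t ≤ 1/4) {a : ℕ} (ha : 1 ≤ a) (n : ℕ) :
    ∑ m ∈ Finset.Ico a n, d m * t^m ≤ d a * t^a * (4/3) := by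
  calc ∑ m ∈ Finset.Ico a n, d m * t^m ≤ ∑ m ∈ Finset.Ico a n, d a * t^m := by
        apply Finset.sum_le_sum
        intro m hm
        exact mul_le_mul_of_nonneg_right (d_antitone ha (Finset.mem_Ico.mp hm).1)
          (pow_nonneg ht0 m)
    _ = d a * ∑ m ∈ Finset.Ico a n, t^m := by rw [Finset.mul_sum]
    _ ≤ d a * (t^a * (4/3)) :=
        mul_le_mul_of_nonneg_left (geom_bound ht0 ht a n) (d_pos a ha).le
    _ = d a * t^a * (4/3) := by ring

noncomputable def S (t : ℝ) (n : ℕ) : ℝ := ∑ m ∈ Finset.range n, (-1)^m * b m * t^m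

lemma b_zero : b 0 = 1 := by norm_num [b, genBinom]

lemma term_eq (t : ℝ) (m : ℕ) : (-1:ℝ)^m * b m * t^m = -(d m * t^m) := by
  rw [b_eq m]
  calc (-1:ℝ)^m * ((-1)^(m+1) * d m) * t^m
      = ((-1:ℝ)^m * (-1)^(m+1)) * (d m * t^m) := by ring
    _ = -(d m * t^m) := by rw [neg_one_pow_mul]; ring

lemma S_eq (t : ℝ) {n : ℕ} (hn : 1 ≤ n) :
    S t n = 1 - ∑ m ∈ Finset.Ico 1 n, d m * t^m := by
  unfold S
  rw [Finset.range_eq_Ico, Finset.sum_eq_sum_Ico_succ_bot hn]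
  rw [Finset.sum_congr rfl (fun m _ => term_eq t m), Finset.sum_neg_distrib]
  rw [show (-1:ℝ)^0 * b 0 * t^0 = 1 by rw [b_zero]; norm_num]
  ring

lemma S_ge {t : ℝ} (ht0 : 0 ≤ t) (ht : t ≤ 1/4) {n : ℕ} (hn : 1 ≤ n) :
    5/6 ≤ S t n := by
  rw [S_eq t hn]
  have h := tail_bound ht0 ht le_rfl n
  rw [d_one, pow_one] at h
  nlinarith

lemma S_diff {t : ℝ} {a n : ℕ} (han : a ≤ n) :
    S t n = S t a - ∑ m ∈ Finset.Ico a n, d m * t^m := by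
  unfold S
  rw [Finset.range_eq_Ico,
    ← Finset.sum_Ico_consecutive _ (Nat.zero_le a) han]
  rw [Finset.sum_congr rfl (fun m (_ : m ∈ Finset.Ico a n) => term_eq t m),
    Finset.sum_neg_distrib]
  rw [← Finset.range_eq_Ico]
  ring

lemma mid_vand {k : ℕ} (hk : 2 ≤ k) :
    ∑ i ∈ Finset.Ico 1 k, d i * d (k - i) = 2 * d k := by
  have hv := vand k
  rw [Nat.choose_eq_zero_of_lt (by omega : 1 < k)] at hv
  rw [Finset.range_eq_Ico, Finset.sum_eq_sum_Ico_succ_bot (by omega : 0 < k + 1),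
    Finset.sum_Ico_succ_top (by omega : 1 ≤ k)] at hv
  simp only [Nat.sub_zero, Nat.sub_self, b_zero, Nat.cast_zero] at hv
  -- hv : 1 * b k + (∑ i ∈ Ico 1 k, b i * b (k - i) + b k * 1) = 0
  have hterm : ∀ i ∈ Finset.Ico 1 k, b i * b (k - i) = (-1)^k * (d i * d (k - i)) := by
    intro i hi
    obtain ⟨hi1, hik⟩ := Finset.mem_Ico.mp hi
    rw [b_eq i, b_eq (k - i)]
    have hpow : ((-1:ℝ))^(i+1) * (-1)^((k-i)+1) = (-1)^k := by
      rw [← pow_add, show (i+1) + ((k-i)+1) = k + 2 by omega, pow_add]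
      norm_num
    calc (-1:ℝ)^(i+1) * d i * ((-1)^((k-i)+1) * d (k - i))
        = ((-1:ℝ)^(i+1) * (-1)^((k-i)+1)) * (d i * d (k - i)) := by ring
      _ = (-1)^k * (d i * d (k - i)) := by rw [hpow]
  rw [Finset.sum_congr rfl hterm, ← Finset.mul_sum] at hv
  have hbk : b k = (-1)^(k+1) * d k := b_eq k
  have hsign : ((-1:ℝ))^k * (-1)^(k+1) = -1 := neg_one_pow_mul k
  have hk2 : ((-1:ℝ))^k * (-1)^k = 1 := by
    rw [← pow_add]; exact Even.neg_one_pow ⟨k, by ring⟩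
  have hS : ((-1:ℝ))^k * ∑ i ∈ Finset.Ico 1 k, d i * d (k - i) = -2 * b k := by
    linarith [hv]
  calc ∑ i ∈ Finset.Ico 1 k, d i * d (k - i)
      = ((-1:ℝ)^k * (-1)^k) * ∑ i ∈ Finset.Ico 1 k, d i * d (k - i) := by rw [hk2]; ring
    _ = (-1:ℝ)^k * ((-1:ℝ)^k * ∑ i ∈ Finset.Ico 1 k, d i * d (k - i)) := by ring
    _ = (-1:ℝ)^k * (-2 * b k) := by rw [hS]
    _ = -2 * ((-1:ℝ)^k * ((-1)^(k+1) * d k)) := by rw [hbk]; ring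
    _ = -2 * (((-1:ℝ)^k * (-1)^(k+1)) * d k) := by ring
    _ = 2 * d k := by rw [hsign]; ring

lemma S_sq {t : ℝ} (ht0 : 0 ≤ t) (ht : t ≤ 1/4) {n : ℕ} (hn : 2 ≤ n) :
    ∃ E : ℝ, S t n ^ 2 = (1 - t) + E ∧ 0 ≤ E ∧ E ≤ 2 * t^n := by
  classical
  set f : ℕ → ℝ := fun m => (-1)^m * b m * t^m with hf
  set A : ℕ → ℝ := fun k =>
    ∑ p ∈ (Finset.range n ×ˢ Finset.range n).filter (fun p => p.1 + p.2 = k),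
      f p.1 * f p.2 with hA
  have hsq : S t n ^ 2 = ∑ k ∈ Finset.range (2*n), A k := by
    have h0 : S t n = ∑ m ∈ Finset.range n, f m := rfl
    rw [h0, sq, Finset.sum_mul_sum,
      ← Finset.sum_product' (Finset.range n) (Finset.range n) (fun i j => f i * f j)]
    have hmaps : ∀ p ∈ Finset.range n ×ˢ Finset.range n, p.1 + p.2 ∈ Finset.range (2*n) := by
      intro p hp
      rw [Finset.mem_product, Finset.mem_range, Finset.mem_range] at hp
      rw [Finset.mem_range]
      omega
    exact (Finset.sum_fiberwise_of_maps_to hmaps (fun p => f p.1 * f p.2)).symm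
  have hAlow : ∀ k, k < n → A k = (-1)^k * (Nat.choose 1 k : ℝ) * t^k := by
    intro k hk
    have hset : (Finset.range n ×ˢ Finset.range n).filter (fun p => p.1 + p.2 = k)
        = Finset.HasAntidiagonal.antidiagonal k := by
      ext p
      simp only [Finset.mem_filter, Finset.mem_product, Finset.mem_range,
        Finset.HasAntidiagonal.mem_antidiagonal]
      omega
    show (∑ p ∈ (Finset.range n ×ˢ Finset.range n).filter (fun p => p.1 + p.2 = k),
      f p.1 * f p.2) = _
    rw [hset, Finset.Nat.sum_antidiagonal_eq_sum_range_succ_mk]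
    have hterm : ∀ i ∈ Finset.range (k+1),
        f (i, k - i).1 * f (i, k - i).2 = (-1)^k * (b i * b (k - i)) * t^k := by
      intro i hi
      have hik : i ≤ k := by rw [Finset.mem_range] at hi; omega
      have h1 : ((-1:ℝ))^i * (-1)^(k-i) = (-1)^k := by
        rw [← pow_add, Nat.add_sub_cancel' hik]
      have h2 : t^i * t^(k-i) = t^k := by rw [← pow_add, Nat.add_sub_cancel' hik]
      show f i * f (k - i) = _
      calc f i * f (k - i)
          = (((-1:ℝ))^i * (-1)^(k-i)) * (b i * b (k-i)) * (t^i * t^(k-i)) := by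
            simp only [hf]; ring
        _ = (-1)^k * (b i * b (k-i)) * t^k := by rw [h1, h2]
    rw [Finset.sum_congr rfl hterm, ← Finset.sum_mul, ← Finset.mul_sum, vand k]
  have hAmid : ∀ k, n ≤ k → 0 ≤ A k ∧ A k ≤ t^k := by
    intro k hkn
    have hk2 : 2 ≤ k := le_trans hn hkn
    have hmem : ∀ p ∈ (Finset.range n ×ˢ Finset.range n).filter (fun p => p.1 + p.2 = k),
        1 ≤ p.1 ∧ 1 ≤ p.2 ∧ p.1 + p.2 = k := by
      intro p hp
      rw [Finset.mem_filter, Finset.mem_product, Finset.mem_range, Finset.mem_range] at hp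
      omega
    have hterm : ∀ p ∈ (Finset.range n ×ˢ Finset.range n).filter (fun p => p.1 + p.2 = k),
        f p.1 * f p.2 = d p.1 * d p.2 * t^k := by
      intro p hp
      obtain ⟨h1, h2, hpk⟩ := hmem p hp
      have hpow : t^p.1 * t^p.2 = t^k := by rw [← pow_add, hpk]
      have hs1 : ((-1:ℝ))^p.1 * (-1)^(p.1+1) = -1 := neg_one_pow_mul p.1
      have hs2 : ((-1:ℝ))^p.2 * (-1)^(p.2+1) = -1 := neg_one_pow_mul p.2
      calc f p.1 * f p.2
          = (((-1:ℝ))^p.1 * (-1)^(p.1+1)) * (((-1:ℝ))^p.2 * (-1)^(p.2+1))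
            * (d p.1 * d p.2) * (t^p.1 * t^p.2) := by
            simp only [hf]; rw [b_eq p.1, b_eq p.2]; ring
        _ = d p.1 * d p.2 * t^k := by rw [hs1, hs2, hpow]; ring
    have hA_eq : A k = ∑ p ∈ (Finset.range n ×ˢ Finset.range n).filter
        (fun p => p.1 + p.2 = k), d p.1 * d p.2 * t^k := Finset.sum_congr rfl hterm
    constructor
    · rw [hA_eq]
      apply Finset.sum_nonneg
      intro p hp
      obtain ⟨h1, h2, _⟩ := hmem p hp
      exact mul_nonneg (mul_nonneg (d_pos _ h1).le (d_pos _ h2).le) (pow_nonneg ht0 k)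
    · have hsub : (Finset.range n ×ˢ Finset.range n).filter (fun p => p.1 + p.2 = k)
          ⊆ (Finset.HasAntidiagonal.antidiagonal k).filter (fun p => 1 ≤ p.1 ∧ 1 ≤ p.2) := by
        intro p hp
        obtain ⟨h1, h2, hpk⟩ := hmem p hp
        rw [Finset.mem_filter, Finset.HasAntidiagonal.mem_antidiagonal]
        exact ⟨hpk, h1, h2⟩
      have hle : A k ≤ ∑ p ∈ (Finset.HasAntidiagonal.antidiagonal k).filter (fun p => 1 ≤ p.1 ∧ 1 ≤ p.2),
          d p.1 * d p.2 * t^k := by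
        rw [hA_eq]
        apply Finset.sum_le_sum_of_subset_of_nonneg hsub
        intro p hp _
        rw [Finset.mem_filter] at hp
        exact mul_nonneg (mul_nonneg (d_pos _ hp.2.1).le (d_pos _ hp.2.2).le)
          (pow_nonneg ht0 k)
      have hM : ∑ p ∈ (Finset.HasAntidiagonal.antidiagonal k).filter (fun p => 1 ≤ p.1 ∧ 1 ≤ p.2),
          d p.1 * d p.2 * t^k = (∑ i ∈ Finset.Ico 1 k, d i * d (k - i)) * t^k := by
        rw [Finset.sum_filter, Finset.Nat.sum_antidiagonal_eq_sum_range_succ_mk]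
        have hfilter : Finset.filter (fun i => 1 ≤ i ∧ 1 ≤ k - i) (Finset.range (k+1))
            = Finset.Ico 1 k := by
          ext i
          simp only [Finset.mem_filter, Finset.mem_range, Finset.mem_Ico]
          omega
        rw [show (∑ i ∈ Finset.range (k+1),
              if 1 ≤ (i, k - i).1 ∧ 1 ≤ (i, k - i).2 then d (i, k-i).1 * d (i, k-i).2 * t^k else 0)
            = ∑ i ∈ Finset.filter (fun i => 1 ≤ i ∧ 1 ≤ k - i) (Finset.range (k+1)),
              d i * d (k - i) * t^k from (Finset.sum_filter _ _).symm]
        rw [hfilter, ← Finset.sum_mul]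
      have hfin : (∑ i ∈ Finset.Ico 1 k, d i * d (k - i)) * t^k ≤ t^k := by
        rw [mid_vand hk2]
        have hdk : d k ≤ 1/2 := d_le_half (by omega)
        have hdk0 : 0 < d k := d_pos k (by omega)
        nlinarith [pow_nonneg ht0 k]
      linarith
  refine ⟨∑ k ∈ Finset.Ico n (2*n), A k, ?_, ?_, ?_⟩
  · rw [hsq, Finset.range_eq_Ico,
      ← Finset.sum_Ico_consecutive A (Nat.zero_le n) (by omega : n ≤ 2*n)]
    have hmain : ∑ k ∈ Finset.Ico 0 n, A k = 1 - t := by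
      rw [← Finset.range_eq_Ico,
        Finset.sum_congr rfl (fun k hk => hAlow k (Finset.mem_range.mp hk))]
      have hzero : ∀ k ∈ Finset.range n, k ∉ Finset.range 2 →
          (-1:ℝ)^k * (Nat.choose 1 k : ℝ) * t^k = 0 := by
        intro k _ hk2
        rw [Finset.mem_range, not_lt] at hk2
        rw [Nat.choose_eq_zero_of_lt (by omega)]
        norm_num
      rw [← Finset.sum_subset (Finset.range_subset_range.mpr hn) hzero]
      simp [Finset.sum_range_succ]
      ring
    rw [hmain]
  · exact Finset.sum_nonneg fun k hk => (hAmid k (Finset.mem_Ico.mp hk).1).1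
  · calc ∑ k ∈ Finset.Ico n (2*n), A k ≤ ∑ k ∈ Finset.Ico n (2*n), t^k :=
        Finset.sum_le_sum fun k hk => (hAmid k (Finset.mem_Ico.mp hk).1).2
      _ ≤ t^n * (4/3) := geom_bound ht0 ht n (2*n)
      _ ≤ 2 * t^n := by nlinarith [pow_nonneg ht0 n]

lemma key {t : ℝ} (ht0 : 0 ≤ t) (ht : t ≤ 1/4) {N n : ℕ} (hn : N + 2 ≤ n) :
    |Real.sqrt (1 - t) - S t (N+2)| ≤ 2 * t^n + d (N+2) * t^(N+2) * (4/3) := by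
  have hn2 : 2 ≤ n := by omega
  obtain ⟨E, hE, hE0, hE2⟩ := S_sq ht0 ht hn2
  have hSn := S_ge ht0 ht (by omega : 1 ≤ n)
  have hsqrt_half : (1:ℝ)/2 ≤ Real.sqrt (1 - t) := by
    rw [show (1:ℝ)/2 = Real.sqrt ((1/2)^2) from (Real.sqrt_sq (by norm_num)).symm]
    exact Real.sqrt_le_sqrt (by nlinarith)
  have hsq2 : Real.sqrt (1 - t) ^ 2 = 1 - t := Real.sq_sqrt (by linarith)
  have hle : Real.sqrt (1 - t) ≤ S t n := by
    have h1 : Real.sqrt (1 - t) ≤ Real.sqrt (S t n ^ 2) :=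
      Real.sqrt_le_sqrt (by nlinarith)
    rwa [Real.sqrt_sq (by linarith : 0 ≤ S t n)] at h1
  have hprod : (S t n - Real.sqrt (1 - t)) * (S t n + Real.sqrt (1 - t)) = E := by
    have h2 : (S t n - Real.sqrt (1 - t)) * (S t n + Real.sqrt (1 - t))
        = S t n ^ 2 - Real.sqrt (1 - t) ^ 2 := by ring
    rw [h2, hsq2, hE]
    ring
  have hupper : S t n - Real.sqrt (1 - t) ≤ 2 * t^n := by
    nlinarith [hprod, hle, hsqrt_half, hSn, hE2]
  have hdiff := S_diff (t := t) hn
  set T := ∑ m ∈ Finset.Ico (N+2) n, d m * t^m with hT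
  have hT0 : 0 ≤ T := tail_nonneg ht0 (by omega) n
  have hTb : T ≤ d (N+2) * t^(N+2) * (4/3) := tail_bound ht0 ht (by omega) n
  have htn : (0:ℝ) ≤ t^n := pow_nonneg ht0 n
  rw [abs_le]
  constructor
  · linarith
  · linarith

end Stmt7Aux

theorem stmt7 :
    ∀ N : ℕ, 3 ≤ N → ∀ x : ℝ, |x| ≤ 1 / 2 →
      |Real.sqrt (1 - x ^ 2) -
          ∑ m ∈ Finset.range (N + 2), (-1 : ℝ) ^ m * genBinom (1/2) m * x ^ (2 * m)| ≤
        x ^ (2 * N + 4) / (15 * Real.sqrt π) := by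
  intro N hN x hx
  open Stmt7Aux in
  set t : ℝ := x^2 with htdef
  have ht0 : 0 ≤ t := sq_nonneg x
  have ht : t ≤ 1/4 := by
    have h1 : |x|^2 ≤ (1/2 : ℝ)^2 := pow_le_pow_left₀ (abs_nonneg x) hx 2
    rw [sq_abs] at h1
    rw [htdef]
    nlinarith
  have hsum : ∑ m ∈ Finset.range (N + 2), (-1 : ℝ) ^ m * genBinom (1/2) m * x ^ (2 * m)
      = Stmt7Aux.S t (N+2) := by
    apply Finset.sum_congr rfl
    intro m _
    rw [pow_mul]
    rfl
  have hpow : x ^ (2 * N + 4) = t ^ (N + 2) := by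
    rw [show 2 * N + 4 = 2 * (N + 2) by ring, pow_mul]
  rw [hsum, hpow]
  set B : ℝ := Stmt7Aux.d (N+2) * t^(N+2) * (4/3) with hB
  have hlim : Filter.Tendsto (fun n => 2 * t^n + B) Filter.atTop (nhds B) := by
    have h0 : Filter.Tendsto (fun n : ℕ => t^n) Filter.atTop (nhds 0) :=
      tendsto_pow_atTop_nhds_zero_of_lt_one ht0 (by linarith)
    have h1 := (h0.const_mul 2).add_const B
    simpa using h1
  have habs : |Real.sqrt (1 - t) - Stmt7Aux.S t (N+2)| ≤ B := by
    apply ge_of_tendsto hlim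
    filter_upwards [Filter.eventually_ge_atTop (N+2)] with n hn
    exact Stmt7Aux.key ht0 ht hn
  have hd : Stmt7Aux.d (N+2) ≤ 7/256 := by
    have h5 := Stmt7Aux.d_antitone (m := 5) (k := N+2) (by norm_num) (by omega)
    rwa [Stmt7Aux.d_five] at h5
  have hds : 0 < Stmt7Aux.d (N+2) := Stmt7Aux.d_pos _ (by omega)
  have htp : (0:ℝ) ≤ t^(N+2) := pow_nonneg ht0 _
  have hsqrtpi : Real.sqrt π ≤ 64/35 := by
    rw [show (64/35 : ℝ) = Real.sqrt ((64/35)^2) from (Real.sqrt_sq (by norm_num)).symm]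
    exact Real.sqrt_le_sqrt (by nlinarith [Real.pi_lt_d2])
  have hsqrtpi0 : 0 < Real.sqrt π := Real.sqrt_pos.mpr Real.pi_pos
  have hBle : B ≤ t^(N+2) / (15 * Real.sqrt π) := by
    have h1 : B ≤ t^(N+2) * (7/192) := by
      rw [hB]
      nlinarith
    have hden : (15:ℝ) * Real.sqrt π ≤ 192/7 := by nlinarith
    have h2 : t^(N+2) * (7/192) ≤ t^(N+2) / (15 * Real.sqrt π) := by
      calc t^(N+2) * (7/192) = t^(N+2) / (192/7) := by ring
        _ ≤ t^(N+2) / (15 * Real.sqrt π) :=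
            div_le_div_of_nonneg_left htp (by positivity) hden
    linarith
  -- note: goal uses √(1 - x^2) = √(1 - t)
  exact le_trans habs hBle
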